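/- (Polynomial decay of the energy gap along a gradient flow satisfying a Łojasiewicz inequality.) Let H be a real Hilbert space, U ⊆ H open, and E : U → ℝ a Fréchet differentiable function with gradient ∇E. Let u : [0,∞) → U be a C¹ curve with u'(t) = -∇E(u(t)) for all t ≥ 0. Suppose there exist E∞ ∈ ℝ, α ∈ (0,1) and C > 0 such that for all t ≥ 0 one has E(u(t)) > E∞ and (E(u(t)) - E∞)^{1-α/2} ≤ C·‖∇E(u(t))‖. Then for all t > 0, E(u(t)) - E∞ ≤ (C²/((1-α)·t))^{1/(1-α)}. -/

import Mathlib

/-!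
Along the flow, `f t := E (u t) - Elim` satisfies `f' = -‖∇E (u t)‖²`, and squaring the
Łojasiewicz inequality turns this into the differential inequality `f' ≤ -f ^ (2 - α) / C²`.
With `p = 1 - α`, the function `f ^ (-p)` then grows at rate at least `p / C²`, so
`f t ^ (-p) ≥ p t / C²`, which is the claimed bound after taking `p`-th roots.
-/

open Real Set

theorem HasGradientAt.comp_hasDerivAt {H : Type*} [NormedAddCommGroup H]
    [InnerProductSpace ℝ H] [CompleteSpace H] {E : H → ℝ} {u : ℝ → H} {g v : H} {t : ℝ}
    (hE : HasGradientAt E g (u t)) (hu : HasDerivAt u v t) :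
    HasDerivAt (fun s => E (u s)) (inner ℝ g v) t :=
  hE.hasFDerivAt.comp_hasDerivAt t hu

theorem hasDerivAt_comp_of_hasDerivAt_neg_gradient {H : Type*} [NormedAddCommGroup H]
    [InnerProductSpace ℝ H] [CompleteSpace H] {E : H → ℝ} {u : ℝ → H} {t : ℝ}
    (hE : DifferentiableAt ℝ E (u t)) (hu : HasDerivAt u (-gradient E (u t)) t) :
    HasDerivAt (fun s => E (u s)) (-‖gradient E (u t)‖ ^ 2) t := by
  simpa [real_inner_self_eq_norm_sq] using hE.hasGradientAt.comp_hasDerivAt hu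

theorem le_inv_rpow_one_div_of_le_rpow_neg {x y p : ℝ} (hx : 0 < x) (hy : 0 < y)
    (hp : 0 < p) (h : y ≤ x ^ (-p)) : x ≤ y⁻¹ ^ (1 / p) := by
  rw [one_div, le_rpow_inv_iff_of_pos hx.le (inv_pos.2 hy).le hp,
    le_inv_comm₀ (rpow_pos_of_pos hx p) hy, ← rpow_neg hx.le]
  exact h

theorem le_rpow_of_hasDerivAt_le_neg_rpow {f f' : ℝ → ℝ} {p K : ℝ} (hp : 0 < p) (hK : 0 < K)
    (hpos : ∀ t, 0 ≤ t → 0 < f t) (hf : ∀ t, 0 ≤ t → HasDerivAt f (f' t) t)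
    (hf' : ∀ t, 0 ≤ t → f' t ≤ -(f t ^ (1 + p) / K)) {t : ℝ} (ht : 0 < t) :
    f t ≤ (K / (p * t)) ^ (1 / p) := by
  have hderiv : ∀ s, 0 ≤ s →
      HasDerivAt (fun s => f s ^ (-p)) (f' s * -p * f s ^ (-p - 1)) s := fun s hs =>
    (hf s hs).rpow_const (Or.inl (hpos s hs).ne')
  have hrate : ∀ s, 0 ≤ s → p / K ≤ f' s * -p * f s ^ (-p - 1) := by
    intro s hs
    have hfs := hpos s hs
    have hcancel : f s ^ (1 + p) * f s ^ (-p - 1) = 1 := by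
      rw [← rpow_add hfs, show 1 + p + (-p - 1) = 0 by ring, rpow_zero]
    calc p / K = f s ^ (1 + p) * f s ^ (-p - 1) * p / K := by rw [hcancel, one_mul]
      _ = f s ^ (1 + p) / K * p * f s ^ (-p - 1) := by ring
      _ ≤ -f' s * p * f s ^ (-p - 1) := by gcongr; linarith [hf' s hs]
      _ = f' s * -p * f s ^ (-p - 1) := by ring
  have hgrowth : p / K * (t - 0) ≤ f t ^ (-p) - f 0 ^ (-p) := by
    refine (convex_Ici 0).mul_sub_le_image_sub_of_le_deriv
      (fun s hs => (hderiv s hs).continuousAt.continuousWithinAt)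
      (fun s hs => (hderiv s (interior_subset hs)).differentiableAt.differentiableWithinAt)
      (fun s hs => ?_) 0 self_mem_Ici t ht.le ht.le
    rw [(hderiv s (interior_subset hs)).deriv]
    exact hrate s (interior_subset hs)
  have hbound : p * t / K ≤ f t ^ (-p) := by
    have hinit := rpow_pos_of_pos (hpos 0 le_rfl) (-p)
    rw [sub_zero, div_mul_eq_mul_div] at hgrowth
    linarith
  simpa only [inv_div] using le_inv_rpow_one_div_of_le_rpow_neg (hpos t ht.le)
    (by positivity) hp hbound

theorem gradient_flow_energy_gap_polynomial_decay_general
    {H : Type*} [NormedAddCommGroup H] [InnerProductSpace ℝ H] [CompleteSpace H]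
    (U : Set H) (E : H → ℝ)
    (hE : ∀ x ∈ U, DifferentiableAt ℝ E x)
    (u : ℝ → H)
    (hmem : ∀ t : ℝ, 0 ≤ t → u t ∈ U)
    (hflow : ∀ t : ℝ, 0 ≤ t → HasDerivAt u (-(gradient E (u t))) t)
    (Elim α C : ℝ) (hα : α ∈ Set.Ioo (0 : ℝ) 1) (hC : 0 < C)
    (hgt : ∀ t : ℝ, 0 ≤ t → Elim < E (u t))
    (hloj : ∀ t : ℝ, 0 ≤ t →
      (E (u t) - Elim) ^ (1 - α / 2) ≤ C * ‖gradient E (u t)‖) :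
    ∀ t : ℝ, 0 < t → E (u t) - Elim ≤ (C ^ 2 / ((1 - α) * t)) ^ (1 / (1 - α)) := by
  intro t ht
  refine le_rpow_of_hasDerivAt_le_neg_rpow (f := fun s => E (u s) - Elim) (sub_pos.2 hα.2)
    (by positivity) (fun s hs => sub_pos.2 (hgt s hs))
    (fun s hs => ((hasDerivAt_comp_of_hasDerivAt_neg_gradient (hE _ (hmem s hs))
      (hflow s hs)).sub_const Elim)) (fun s hs => ?_) ht
  have hgap := (sub_pos.2 (hgt s hs)).le
  have hsquared : (E (u s) - Elim) ^ (1 + (1 - α)) ≤ C ^ 2 * ‖gradient E (u s)‖ ^ 2 :=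
    calc (E (u s) - Elim) ^ (1 + (1 - α)) = ((E (u s) - Elim) ^ (1 - α / 2)) ^ 2 := by
          rw [← rpow_two, ← rpow_mul hgap]; ring_nf
      _ ≤ (C * ‖gradient E (u s)‖) ^ 2 := pow_le_pow_left₀ (by positivity) (hloj s hs) 2
      _ = C ^ 2 * ‖gradient E (u s)‖ ^ 2 := mul_pow _ _ _
  rw [neg_le_neg_iff, div_le_iff₀ (by positivity)]
  linarith

/-- Polynomial decay of the energy gap along a gradient flow satisfying a
Łojasiewicz inequality. Along a negative gradient flow trajectory `u` of a Fréchet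
differentiable function `E` on an open subset of a real Hilbert space, if `E(u t) > Elim`
and `(E(u t) - Elim)^(1-α/2) ≤ C·‖∇E(u t)‖` for all `t ≥ 0`, then
`E(u t) - Elim ≤ (C²/((1-α)·t))^(1/(1-α))` for all `t > 0`. -/
theorem gradient_flow_energy_gap_polynomial_decay
    {H : Type*} [NormedAddCommGroup H] [InnerProductSpace ℝ H] [CompleteSpace H]
    (U : Set H) (hU : IsOpen U) (E : H → ℝ)
    (hE : ∀ x ∈ U, DifferentiableAt ℝ E x)
    (u : ℝ → H)
    (hmem : ∀ t : ℝ, 0 ≤ t → u t ∈ U)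
    (hflow : ∀ t : ℝ, 0 ≤ t → HasDerivAt u (-(gradient E (u t))) t)
    (Elim α C : ℝ) (hα : α ∈ Set.Ioo (0 : ℝ) 1) (hC : 0 < C)
    (hgt : ∀ t : ℝ, 0 ≤ t → Elim < E (u t))
    (hloj : ∀ t : ℝ, 0 ≤ t →
      (E (u t) - Elim) ^ (1 - α / 2) ≤ C * ‖gradient E (u t)‖) :
    ∀ t : ℝ, 0 < t → E (u t) - Elim ≤ (C ^ 2 / ((1 - α) * t)) ^ (1 / (1 - α)) :=
  gradient_flow_energy_gap_polynomial_decay_general U E hE u hmem hflow Elim α C hα hC hgt hloj
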